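/- arXiv:1711.02983 — 5 statements merged into one kernel-verified Lean document; each statement's English description precedes it below -/
import Mathlib

section
/- Let g₁ = !![a₁,b₁;c₁,d₁] and g₂ = !![a₂,b₂;c₂,d₂] be 2×2 complex matrices with det g₂ ≠ 0, and let z₁, z₂ ∈ ℂ with c₁z₁ + d₁ ≠ 0 and c₂z₂ + d₂ ≠ 0. Then g₁ · w(z₁,z₂) · g₂⁻¹ = (((c₁z₁+d₁)(c₂z₂+d₂))/det g₂) · w((a₁z₁+b₁)/(c₁z₁+d₁), (a₂z₂+b₂)/(c₂z₂+d₂)). In particular, for pairs with det g₁ = det g₂ = ν this gives the automorphy factor j(g₁,g₂,z₁,z₂) = (c₁z₁+d₁)(c₂z₂+d₂). -/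
/-- The matrix `w(z₁,z₂) = !![z₁, -z₁z₂; 1, -z₂]` of the paper (its `w_N`). -/
def wMat (z₁ z₂ : ℂ) : Matrix (Fin 2) (Fin 2) ℂ := !![z₁, -(z₁ * z₂); 1, -z₂]

/-!
`w(z₁, z₂)` is the rank-one matrix `(z₁, 1)ᵀ (1, -z₂)`. A matrix `g` acts on the column
`(z, 1)ᵀ` by the Möbius transformation up to the factor `cz + d`, and the adjugate of `g`
acts on the row `(1, -z)` in the same way. Hence `g₁ w(z₁, z₂) g₂⁻¹` is again of the form
`w(g₁z₁, g₂z₂)`, with the two factors `cᵢzᵢ + dᵢ` and the `1 / det g₂` of `g₂⁻¹` in front.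
-/

open Matrix

section Field

variable {K : Type*} [Field K]

theorem mulVec_vecCons_one_fin_two (a b c d z : K) (h : c * z + d ≠ 0) :
    !![a, b; c, d] *ᵥ ![z, 1] = (c * z + d) • ![(a * z + b) / (c * z + d), 1] := by
  ext i
  fin_cases i <;> simp [mul_div_cancel₀ _ h, mul_comm]

theorem vecMul_adjugate_fin_two (a b c d z : K) (h : c * z + d ≠ 0) :
    ![1, -z] ᵥ* adjugate !![a, b; c, d] = (c * z + d) • ![1, -((a * z + b) / (c * z + d))] := by
  ext i
  fin_cases i <;> simp [adjugate_fin_two, mul_div_cancel₀ _ h, vecMul, dotProduct] <;> ring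

end Field

theorem wMat_eq_vecMulVec (z₁ z₂ : ℂ) : wMat z₁ z₂ = vecMulVec ![z₁, 1] ![1, -z₂] := by
  ext i j
  fin_cases i <;> fin_cases j <;> simp [wMat, vecMulVec_apply]

theorem stmt3_general (a₁ b₁ c₁ d₁ a₂ b₂ c₂ d₂ z₁ z₂ : ℂ)
    (h₁ : c₁ * z₁ + d₁ ≠ 0) (h₂ : c₂ * z₂ + d₂ ≠ 0) :
    !![a₁, b₁; c₁, d₁] * wMat z₁ z₂ * (!![a₂, b₂; c₂, d₂] : Matrix (Fin 2) (Fin 2) ℂ)⁻¹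
      = (((c₁ * z₁ + d₁) * (c₂ * z₂ + d₂))
            / (!![a₂, b₂; c₂, d₂] : Matrix (Fin 2) (Fin 2) ℂ).det) •
          wMat ((a₁ * z₁ + b₁) / (c₁ * z₁ + d₁)) ((a₂ * z₂ + b₂) / (c₂ * z₂ + d₂)) := by
  rw [inv_def, Ring.inverse_eq_inv', wMat_eq_vecMulVec, wMat_eq_vecMulVec, Matrix.mul_smul,
    mul_vecMulVec, vecMulVec_mul, mulVec_vecCons_one_fin_two _ _ _ _ _ h₁,
    vecMul_adjugate_fin_two _ _ _ _ _ h₂, smul_vecMulVec, vecMulVec_smul, smul_smul, smul_smul]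
  congr 1
  ring

/-- **Paper, Proposition 3.1, equation (3.1).** For `g₁ = !![a₁,b₁;c₁,d₁]`,
`g₂ = !![a₂,b₂;c₂,d₂]` with `det g₂ ≠ 0`, `c₁z₁+d₁ ≠ 0`, `c₂z₂+d₂ ≠ 0`, one has
`g₁ · w(z₁,z₂) · g₂⁻¹ = ((c₁z₁+d₁)(c₂z₂+d₂)/det g₂) · w(g₁z₁, g₂z₂)`, where `gᵢzᵢ`
denotes the Möbius transform; this exhibits the automorphy factor
`j(g₁,g₂,z₁,z₂) = (c₁z₁+d₁)(c₂z₂+d₂)`. -/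
theorem stmt3 (a₁ b₁ c₁ d₁ a₂ b₂ c₂ d₂ z₁ z₂ : ℂ)
    (hdet : (!![a₂, b₂; c₂, d₂] : Matrix (Fin 2) (Fin 2) ℂ).det ≠ 0)
    (h₁ : c₁ * z₁ + d₁ ≠ 0) (h₂ : c₂ * z₂ + d₂ ≠ 0) :
    !![a₁, b₁; c₁, d₁] * wMat z₁ z₂ * (!![a₂, b₂; c₂, d₂] : Matrix (Fin 2) (Fin 2) ℂ)⁻¹
      = (((c₁ * z₁ + d₁) * (c₂ * z₂ + d₂))
            / (!![a₂, b₂; c₂, d₂] : Matrix (Fin 2) (Fin 2) ℂ).det) •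
          wMat ((a₁ * z₁ + b₁) / (c₁ * z₁ + d₁)) ((a₂ * z₂ + b₂) / (c₂ * z₂ + d₂)) :=
  stmt3_general a₁ b₁ c₁ d₁ a₂ b₂ c₂ d₂ z₁ z₂ h₁ h₂
end

section
/- Let d₁, d₂ be negative integers, and in ℂ set √dⱼ := i·√|dⱼ| and √D := √(d₁d₂) ∈ ℝ_{>0}. For rational numbers x₁, x₂, x₃, x₄ and signs ε, δ ∈ {+1, −1} put z(ε,δ) := x₁ + x₂·(−d₁+ε√d₁)/2 + x₃·(d₂+δ√d₂)/2 + x₄·((−d₁+ε√d₁)/2)·((d₂+δ√d₂)/2). Then (z(+,+)·z(−,−) − z(+,−)·z(−,+))/√D = x₂x₃ − x₁x₄. Equivalently, under the ℤ-basis e₁ = 1, e₂ = (−d₁+√d₁)/2, e₃ = (d₂+√d₂)/2, e₄ = e₂e₃ of E = ℚ(√d₁,√d₂), the ℚ-quadratic form Q_ℚ(x) = tr_{F/ℚ}(x·x̄/√D) corresponds to the determinant form on M₂(ℚ) via Σxᵢeᵢ ↦ !![x₃,x₁;x₄,x₂]. -/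
/-- **Paper, equation (3.2).** With `√dⱼ := i√|dⱼ|`, `√D := √(d₁d₂) > 0`, and
`z(ε,δ) := x₁ + x₂(-d₁+ε√d₁)/2 + x₃(d₂+δ√d₂)/2 + x₄((-d₁+ε√d₁)/2)((d₂+δ√d₂)/2)`,
one has `(z(+,+)z(-,-) - z(+,-)z(-,+))/√D = x₂x₃ - x₁x₄`; i.e. under the basis
`e₁ = 1, e₂ = (-d₁+√d₁)/2, e₃ = (d₂+√d₂)/2, e₄ = e₂e₃` of `E = ℚ(√d₁,√d₂)`, the
quadratic form `tr_{F/ℚ}(x x̄ / √D)` corresponds to the determinant form on `M₂(ℚ)`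
via `Σ xᵢ eᵢ ↦ !![x₃,x₁;x₄,x₂]`. -/
theorem stmt5 (d₁ d₂ : ℤ) (hd₁ : d₁ < 0) (hd₂ : d₂ < 0) (x₁ x₂ x₃ x₄ : ℚ)
    (sd₁ sd₂ sD : ℂ)
    (hsd₁ : sd₁ = Complex.I * Real.sqrt (|d₁| : ℝ))
    (hsd₂ : sd₂ = Complex.I * Real.sqrt (|d₂| : ℝ))
    (hsD : sD = Real.sqrt ((d₁ * d₂ : ℤ) : ℝ))
    (z : ℂ → ℂ → ℂ)
    (hz : ∀ ε δ : ℂ, z ε δ =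
      (x₁ : ℂ) + (x₂ : ℂ) * ((-(d₁ : ℂ) + ε * sd₁) / 2)
        + (x₃ : ℂ) * (((d₂ : ℂ) + δ * sd₂) / 2)
        + (x₄ : ℂ) * ((-(d₁ : ℂ) + ε * sd₁) / 2) * (((d₂ : ℂ) + δ * sd₂) / 2)) :
    (z 1 1 * z (-1) (-1) - z 1 (-1) * z (-1) 1) / sD
      = (x₂ : ℂ) * (x₃ : ℂ) - (x₁ : ℂ) * (x₄ : ℂ) := by
  have hDpos : (0:ℝ) < ((d₁ * d₂ : ℤ) : ℝ) := by
    exact_mod_cast mul_pos_of_neg_of_neg hd₁ hd₂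
  have hne : sD ≠ 0 := by
    rw [hsD]
    exact_mod_cast (Real.sqrt_pos.mpr hDpos).ne'
  have h12 : sd₁ * sd₂ = -sD := by
    rw [hsd₁, hsd₂, hsD]
    have : Real.sqrt (|d₁| : ℝ) * Real.sqrt (|d₂| : ℝ)
        = Real.sqrt ((d₁ * d₂ : ℤ) : ℝ) := by
      rw [← Real.sqrt_mul (by positivity)]
      congr 1
      push_cast
      rw [← abs_mul, abs_of_pos (by exact_mod_cast hDpos)]
    calc Complex.I * (Real.sqrt (|d₁| : ℝ) : ℂ) * (Complex.I * (Real.sqrt (|d₂| : ℝ) : ℂ))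
        = Complex.I ^ 2 * ((Real.sqrt (|d₁| : ℝ) * Real.sqrt (|d₂| : ℝ) : ℝ) : ℂ) := by
          push_cast; ring
      _ = -((Real.sqrt ((d₁ * d₂ : ℤ) : ℝ) : ℝ) : ℂ) := by
          rw [Complex.I_sq, this]; ring
  rw [div_eq_iff hne, hz, hz, hz, hz]
  linear_combination ((x₁ : ℂ) * x₄ - x₂ * x₃) * h12
end

section
/- Fix an integer N ≥ 1, γ ∈ SL₂(ℤ), and points z₁, z₂ in the upper half-plane ℍ. Then there exists a matrix x = !![a,b;c,d] ∈ M₂(ℚ) with x − (1/N)γ ∈ M₂(ℤ), det x = 1/N², and c·z₁z₂ + d·z₁ − a·z₂ − b = 0, if and only if there exists γ₁ ∈ Γ(N) with z₁ = (γ₁γ)·z₂ under the Möbius action of SL₂(ℤ) on ℍ. -/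
/-!
Write `x = (1/N)·A`. Integrality of `x - (1/N)γ` says that `A` is an integral matrix congruent
to `γ` modulo `N`, and `det x = 1/N²` says `det A = 1`; so `x` ranges over `(1/N)·A` with
`A ∈ SL₂(ℤ)`, `A ≡ γ (mod N)`, i.e. `A = γ₁γ` with `γ₁ ∈ Γ(N)`. Finally, the equation
`c z₁ z₂ + d z₁ - a z₂ - b = 0` is homogeneous in the entries of `x`, and for `A` it is
`z₁ = A·z₂` with the denominator `c z₂ + d ≠ 0` cleared.
-/

open scoped MatrixGroups
open Matrix UpperHalfPlane

lemma UpperHalfPlane.eq_smul_iff_cross_mul_eq_zero (A : SL(2, ℤ)) {c : ℂ} (hc : c ≠ 0) (z₁ z₂ : ℍ) :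
    z₁ = A • z₂ ↔ c * (A 1 0 : ℂ) * z₁ * z₂ + c * (A 1 1 : ℂ) * z₁
      - c * (A 0 0 : ℂ) * z₂ - c * (A 0 1 : ℂ) = 0 := by
  have hdenom : (A 1 0 : ℂ) * z₂ + (A 1 1 : ℂ) ≠ 0 := by
    simpa only [ModularGroup.denom_apply] using denom_ne_zero A z₂
  rw [UpperHalfPlane.ext_iff, specialLinearGroup_apply]
  simp only [algebraMap_int_eq, eq_intCast, Complex.ofReal_intCast]
  rw [eq_div_iff hdenom, ← mul_right_inj' hc, ← sub_eq_zero]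
  ring_nf

lemma CongruenceSubgroup.mul_inv_mem_Gamma_iff {N : ℕ} (A γ : SL(2, ℤ)) :
    A * γ⁻¹ ∈ CongruenceSubgroup.Gamma N ↔ ∀ i j, (N : ℤ) ∣ A i j - γ i j := by
  rw [CongruenceSubgroup.Gamma_mem', map_mul, map_inv, mul_inv_eq_one, eq_comm]
  refine (Matrix.SpecialLinearGroup.ext_iff _ _).trans (forall₂_congr fun i j => ?_)
  exact ZMod.intCast_eq_intCast_iff_dvd_sub _ _ _

section ScaledIntegralMatrix

variable {n : Type*} {N : ℕ}

lemma exists_sub_inv_smul_eq_intCast_iff (hN : N ≠ 0) (x : Matrix n n ℚ) (B : Matrix n n ℤ) :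
    (∃ m : Matrix n n ℤ, x - (N : ℚ)⁻¹ • B.map (Int.cast : ℤ → ℚ) = m.map (Int.cast : ℤ → ℚ)) ↔
    ∃ A : Matrix n n ℤ, (∀ i j, (N : ℤ) ∣ A i j - B i j) ∧
      x = (N : ℚ)⁻¹ • A.map (Int.cast : ℤ → ℚ) := by
  have hNq : (N : ℚ) ≠ 0 := Nat.cast_ne_zero.mpr hN
  constructor
  · rintro ⟨m, hm⟩
    refine ⟨B + (N : ℤ) • m, fun i j => ⟨m i j, by
      simp only [Matrix.add_apply, Matrix.smul_apply, smul_eq_mul, add_sub_cancel_left]⟩, ?_⟩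
    ext i j
    have hij := congr_fun₂ hm i j
    simp only [Matrix.sub_apply, Matrix.smul_apply, map_apply, smul_eq_mul, Matrix.add_apply]
      at hij ⊢
    push_cast
    rw [← hij]
    field_simp
    ring
  · rintro ⟨A, hdvd, rfl⟩
    choose m hm using hdvd
    refine ⟨Matrix.of m, ?_⟩
    ext i j
    have hij : (A i j : ℚ) - B i j = N * m i j := by exact_mod_cast hm i j
    simp only [Matrix.sub_apply, Matrix.smul_apply, map_apply, smul_eq_mul, of_apply]
    field_simp
    linear_combination hij

lemma det_inv_smul_intCast_eq_iff [Fintype n] [DecidableEq n] (hN : N ≠ 0) (A : Matrix n n ℤ) :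
    ((N : ℚ)⁻¹ • A.map (Int.cast : ℤ → ℚ)).det = ((N : ℚ) ^ Fintype.card n)⁻¹ ↔ A.det = 1 := by
  have hNq : ((N : ℚ) ^ Fintype.card n)⁻¹ ≠ 0 := by positivity
  rw [det_smul, ← Int.cast_det, inv_pow, mul_eq_left₀ hNq]
  exact Int.cast_eq_one

end ScaledIntegralMatrix

lemma exists_sub_inv_smul_eq_intCast_and_det_eq_iff {N : ℕ} (hN : N ≠ 0) (γ : SL(2, ℤ))
    (x : Matrix (Fin 2) (Fin 2) ℚ) :
    ((∃ m : Matrix (Fin 2) (Fin 2) ℤ,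
        x - (N : ℚ)⁻¹ • (γ : Matrix (Fin 2) (Fin 2) ℤ).map (Int.cast : ℤ → ℚ)
          = m.map (Int.cast : ℤ → ℚ)) ∧ x.det = ((N : ℚ) ^ 2)⁻¹) ↔
    ∃ A : SL(2, ℤ), A * γ⁻¹ ∈ CongruenceSubgroup.Gamma N ∧
      x = (N : ℚ)⁻¹ • (A : Matrix (Fin 2) (Fin 2) ℤ).map (Int.cast : ℤ → ℚ) := by
  rw [exists_sub_inv_smul_eq_intCast_iff hN]
  constructor
  · rintro ⟨⟨A, hcong, rfl⟩, hdet⟩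
    have hA : A.det = 1 := (det_inv_smul_intCast_eq_iff hN A).mp (by rwa [Fintype.card_fin])
    exact ⟨⟨A, hA⟩, (CongruenceSubgroup.mul_inv_mem_Gamma_iff _ _).mpr hcong, rfl⟩
  · rintro ⟨A, hAγ, rfl⟩
    refine ⟨⟨A, (CongruenceSubgroup.mul_inv_mem_Gamma_iff _ _).mp hAγ, rfl⟩, ?_⟩
    simpa using (det_inv_smul_intCast_eq_iff hN _).mpr A.det_coe

/-- **Paper, Lemma 3.2.** Fix `N ≥ 1`, `γ ∈ SL₂(ℤ)` and `z₁, z₂ ∈ ℍ`. There is a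
rational matrix `x = !![a,b;c,d]` with `x - (1/N)γ ∈ M₂(ℤ)`, `det x = 1/N²` and
`c z₁ z₂ + d z₁ - a z₂ - b = 0` (i.e. `x ⟂ w_N(z₁,z₂)` and `Q(x) = 1/N`) iff
`z₁ = (γ₁ γ) z₂` for some `γ₁ ∈ Γ(N)`. -/
theorem stmt9 (N : ℕ) (hN : 1 ≤ N) (γ : Matrix.SpecialLinearGroup (Fin 2) ℤ)
    (z₁ z₂ : UpperHalfPlane) :
    (∃ x : Matrix (Fin 2) (Fin 2) ℚ,
      (∃ m : Matrix (Fin 2) (Fin 2) ℤ,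
        x - (N : ℚ)⁻¹ • ((γ : Matrix (Fin 2) (Fin 2) ℤ).map (Int.cast : ℤ → ℚ))
          = m.map (Int.cast : ℤ → ℚ)) ∧
      x.det = ((N : ℚ) ^ 2)⁻¹ ∧
      ((x 1 0 : ℚ) : ℂ) * (z₁ : ℂ) * (z₂ : ℂ) + ((x 1 1 : ℚ) : ℂ) * (z₁ : ℂ)
        - ((x 0 0 : ℚ) : ℂ) * (z₂ : ℂ) - ((x 0 1 : ℚ) : ℂ) = 0)
    ↔ ∃ γ₁ ∈ CongruenceSubgroup.Gamma N, z₁ = (γ₁ * γ) • z₂ := by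
  have hN0 : N ≠ 0 := by omega
  have hNc : (N : ℂ)⁻¹ ≠ 0 := by simpa using hN0
  constructor
  · rintro ⟨x, hint, hdet, horth⟩
    obtain ⟨A, hAγ, rfl⟩ :=
      (exists_sub_inv_smul_eq_intCast_and_det_eq_iff hN0 γ x).mp ⟨hint, hdet⟩
    refine ⟨A * γ⁻¹, hAγ, ?_⟩
    rw [inv_mul_cancel_right, eq_smul_iff_cross_mul_eq_zero A hNc]
    simpa using horth
  · rintro ⟨γ₁, hγ₁, hz⟩
    obtain ⟨hint, hdet⟩ := (exists_sub_inv_smul_eq_intCast_and_det_eq_iff hN0 γ _).mpr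
      ⟨γ₁ * γ, by rwa [mul_inv_cancel_right], rfl⟩
    exact ⟨_, hint, hdet, by simpa using (eq_smul_iff_cross_mul_eq_zero _ hNc _ _).mp hz⟩
end

section
/- For every b ∈ ℚ₂, the integral ∫_{M₀} ψ(b·x₁x₂) d(μ×μ)(x₁,x₂) equals 1/2 if ‖b‖ ≤ 1, equals 0 if ‖b‖ = 2, and equals ‖b‖⁻¹ if ‖b‖ ≥ 4. (This is the formula for J₀(b) in the proof of Lemma 5.5.) -/
/-!
`M₀` is the disjoint union of `(2ℤ₂)²` and `(1 + 2ℤ₂)²`. On each piece Fubini leaves the inner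
integral `∫_{2ℤ₂} ψ(c y) dy` (on the odd piece after the shift `y ↦ y + 1`, which contributes the
factor `ψ(c)`). As `2ℤ₂` is a group, this integral of the character `ψ(c ·)` is `μ(2ℤ₂) = 1/2` when
`ψ(c ·)` is trivial on it, i.e. `‖c‖ ≤ 2`, and `0` otherwise, since then `(2c)⁻¹ ∈ 2ℤ₂` and
`ψ(c (2c)⁻¹) = ψ(1/2) ≠ 1`. For `‖b‖ ≤ 2` the even piece gives `1/4` and the odd one `ψ(b)/4`, with
`ψ(b) = 1` or `-1` according as `‖b‖ ≤ 1` or `‖b‖ = 2`. For `‖b‖ ≥ 4` the odd piece vanishes and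
the even one is `μ{‖x‖ ≤ 2/‖b‖}/2 = ‖b‖⁻¹`, the Haar measure of balls being obtained from
`μ(ℤ₂) = 1` by scaling.
-/

open MeasureTheory

/-- `M_a = {(x₁,x₂) ∈ ℤ₂² : x₁ + x₂ ≡ a (mod 2)}` from the proof of Lemma 5.5. -/
def Mset (a : ℕ) : Set (ℚ_[2] × ℚ_[2]) :=
  {p | ‖p.1‖ ≤ 1 ∧ ‖p.2‖ ≤ 1 ∧ ‖p.1 + p.2 - (a : ℚ_[2])‖ ≤ 1 / 2}

open Metric
open scoped Pointwise ENNReal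

theorem AddChar.setIntegral_addSubgroup_eq_zero {G : Type*} [AddGroup G] [MeasurableSpace G]
    [MeasurableAdd G] (μ : Measure G) [μ.IsAddRightInvariant] (ψ : AddChar G ℂ)
    (H : AddSubgroup G) {s : G} (hs : s ∈ H) (hψs : ψ s ≠ 1) :
    ∫ x in (H : Set G), ψ x ∂μ = 0 := by
  have hpre : (· + s) ⁻¹' (H : Set G) = H := by
    ext x
    simp [H.add_mem_cancel_right hs]
  have hshift : ∫ x in (H : Set G), ψ x ∂μ = (∫ x in (H : Set G), ψ x ∂μ) * ψ s := by
    calc ∫ x in (H : Set G), ψ x ∂μ = ∫ x in (· + s) ⁻¹' (H : Set G), ψ (x + s) ∂μ :=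
          ((measurePreserving_add_right μ s).setIntegral_preimage_emb
            (measurableEmbedding_addRight s) ψ H).symm
      _ = (∫ x in (H : Set G), ψ x ∂μ) * ψ s := by
          simp only [hpre, AddChar.map_add_eq_mul, integral_mul_const]
  have hzero : (∫ x in (H : Set G), ψ x ∂μ) * (ψ s - 1) = 0 := by
    rw [mul_sub, ← hshift]
    ring
  exact (mul_eq_zero.1 hzero).resolve_right (sub_ne_zero.2 hψs)

namespace Padic

theorem norm_two_eq : ‖(2 : ℚ_[2])‖ = 2⁻¹ := by
  exact_mod_cast norm_p (p := 2)

theorem norm_le_two_zpow_of_lt {x : ℚ_[2]} {n : ℤ} (h : ‖x‖ < 2 ^ (n + 1)) : ‖x‖ ≤ 2 ^ n := by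
  exact_mod_cast (norm_le_pow_iff_norm_lt_pow_add_one x n).2 (by exact_mod_cast h)

theorem norm_le_half_or_norm_sub_one_le_half {x : ℚ_[2]} (hx : ‖x‖ ≤ 1) :
    ‖x‖ ≤ 2⁻¹ ∨ ‖x - 1‖ ≤ 2⁻¹ := by
  obtain ⟨z, rfl⟩ : ∃ z : ℤ_[2], (z : ℚ_[2]) = x := ⟨⟨x, hx⟩, rfl⟩
  obtain ⟨n, hn, hmem⟩ := PadicInt.exists_mem_range z
  have hlt : ‖(z : ℚ_[2]) - n‖ < 2 ^ ((-1 : ℤ) + 1) := by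
    simpa [PadicInt.norm_def] using PadicInt.mem_nonunits.1 hmem
  have hle : ‖(z : ℚ_[2]) - n‖ ≤ 2⁻¹ := by simpa using norm_le_two_zpow_of_lt hlt
  interval_cases n
  · exact Or.inl (by simpa using hle)
  · exact Or.inr (by simpa using hle)

theorem norm_eq_one_of_norm_sub_one_le_half {x : ℚ_[2]} (hx : ‖x - 1‖ ≤ 2⁻¹) : ‖x‖ = 1 := by
  have hne : ‖(1 : ℚ_[2])‖ ≠ ‖x - 1‖ := by
    rw [norm_one]
    linarith
  rw [← add_sub_cancel (1 : ℚ_[2]) x, IsUltrametricDist.norm_add_eq_max_of_norm_ne_norm hne,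
    norm_one, max_eq_left (by linarith)]

theorem closedBall_one_eq_union :
    closedBall (0 : ℚ_[2]) 1 = closedBall 0 2⁻¹ ∪ closedBall 1 2⁻¹ := by
  ext x
  simp only [Set.mem_union, mem_closedBall, dist_eq_norm, sub_zero]
  refine ⟨norm_le_half_or_norm_sub_one_le_half, ?_⟩
  rintro (hx | hx)
  · linarith
  · exact (norm_eq_one_of_norm_sub_one_le_half hx).le

theorem disjoint_closedBall_half : Disjoint (closedBall (0 : ℚ_[2]) 2⁻¹) (closedBall 1 2⁻¹) := by
  refine Set.disjoint_left.2 fun x hx hx1 => ?_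
  rw [mem_closedBall_zero_iff] at hx
  rw [mem_closedBall, dist_eq_norm] at hx1
  linarith [norm_eq_one_of_norm_sub_one_le_half hx1]

theorem Mset_zero_eq :
    Mset 0 = closedBall 0 2⁻¹ ×ˢ closedBall 0 2⁻¹ ∪ closedBall 1 2⁻¹ ×ˢ closedBall 1 2⁻¹ := by
  obtain ⟨H, hH⟩ : ∃ H : AddSubgroup ℚ_[2], ∀ z, z ∈ H ↔ ‖z‖ ≤ 2⁻¹ :=
    ⟨(IsUltrametricDist.closedBall_openAddSubgroup ℚ_[2] (r := 2⁻¹) (by norm_num)).toAddSubgroup,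
      fun z => mem_closedBall_zero_iff⟩
  have h2 : (2 : ℚ_[2]) ∈ H := (hH 2).2 norm_two_eq.le
  ext ⟨x, y⟩
  simp only [Mset, Set.mem_ofPred_eq, Set.mem_union, Set.mem_prod, mem_closedBall, dist_eq_norm,
    Nat.cast_zero, sub_zero, one_div, ← hH]
  constructor
  · rintro ⟨hx, -, hxy⟩
    rcases norm_le_half_or_norm_sub_one_le_half hx with hx | hx <;> rw [← hH] at hx
    · exact Or.inl ⟨hx, (H.add_mem_cancel_left hx).1 hxy⟩
    · refine Or.inr ⟨hx, ?_⟩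
      convert H.sub_mem (H.sub_mem hxy hx) h2 using 1
      ring
  · rintro (⟨hx, hy⟩ | ⟨hx, hy⟩)
    · exact ⟨((hH x).1 hx).trans (by norm_num), ((hH y).1 hy).trans (by norm_num), H.add_mem hx hy⟩
    · refine ⟨(norm_eq_one_of_norm_sub_one_le_half ((hH _).1 hx)).le,
        (norm_eq_one_of_norm_sub_one_le_half ((hH _).1 hy)).le, ?_⟩
      convert H.add_mem (H.add_mem hx hy) h2 using 1
      ring

theorem apply_eq_neg_one_of_norm_eq_two {ψ : AddChar ℚ_[2] ℂ} (hψ : ∀ x : ℚ_[2], ‖x‖ ≤ 1 → ψ x = 1)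
    (hψhalf : ψ 2⁻¹ = -1) {c : ℚ_[2]} (hc : ‖c‖ = 2) : ψ c = -1 := by
  have h2c : ‖2 * c‖ = 1 := by rw [norm_mul, norm_two_eq, hc]; norm_num
  have hodd : ‖2 * c - 1‖ ≤ 2⁻¹ :=
    (norm_le_half_or_norm_sub_one_le_half h2c.le).resolve_left (by rw [h2c]; norm_num)
  have hint : ‖2⁻¹ * (2 * c - 1)‖ ≤ 1 := by
    rw [norm_mul, norm_inv, norm_two_eq, inv_inv]
    linarith
  rw [show c = 2⁻¹ + 2⁻¹ * (2 * c - 1) by ring, AddChar.map_add_eq_mul, hψhalf, hψ _ hint,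
    mul_one]

theorem apply_mul_eq_of_norm_sub_one_le_half {ψ : AddChar ℚ_[2] ℂ}
    (hψ : ∀ x : ℚ_[2], ‖x‖ ≤ 1 → ψ x = 1)
    {b x : ℚ_[2]} (hb : ‖b‖ ≤ 2) (hx : ‖x - 1‖ ≤ 2⁻¹) : ψ (b * x) = ψ b := by
  have hint : ‖b * (x - 1)‖ ≤ 1 := by
    rw [norm_mul]
    nlinarith [norm_nonneg b, norm_nonneg (x - 1)]
  rw [show b * x = b + b * (x - 1) by ring, AddChar.map_add_eq_mul, hψ _ hint, mul_one]

section Measure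

variable [MeasurableSpace ℚ_[2]] [BorelSpace ℚ_[2]] {μ : Measure ℚ_[2]} [μ.IsAddHaarMeasure]

theorem measure_closedBall_half (hμ : μ (closedBall 0 1) = 1) :
    μ (closedBall (0 : ℚ_[2]) 2⁻¹) = 2⁻¹ := by
  have h := measure_union (μ := μ) disjoint_closedBall_half measurableSet_closedBall
  rw [← closedBall_one_eq_union, hμ, Measure.addHaar_closedBall_center μ 1, ← two_mul,
    mul_comm] at h
  exact ENNReal.eq_inv_of_mul_eq_one_left h.symm

theorem measure_closedBall_two_zpow (hμ : μ (closedBall 0 1) = 1) (n : ℤ) :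
    μ (closedBall (0 : ℚ_[2]) (2 ^ n)) = 2 ^ n := by
  set u : ℚ_[2]ˣ := Units.mk0 2 two_ne_zero
  have hsmul : ∀ m : ℤ, u ^ m • closedBall (0 : ℚ_[2]) 1 = closedBall 0 (2 ^ (-m)) := by
    intro m
    rw [Units.smul_def, _root_.smul_closedBall _ _ zero_le_one, smul_zero, mul_one]
    simp [u, norm_two_eq]
  have hχ : (distribHaarChar ℚ_[2] u : ℝ≥0∞) = 2⁻¹ := by
    have h := distribHaarChar_mul μ u (closedBall 0 1)
    rwa [hμ, mul_one, ← zpow_one u, hsmul, zpow_one, zpow_neg_one,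
      measure_closedBall_half hμ] at h
  rw [← neg_neg n, ← hsmul, ← distribHaarChar_mul, hμ, mul_one, map_zpow,
    ENNReal.coe_zpow distribHaarChar_pos.ne', hχ, ENNReal.inv_zpow', neg_neg]

theorem measureReal_closedBall_two_zpow (hμ : μ (closedBall 0 1) = 1) (n : ℤ) :
    μ.real (closedBall (0 : ℚ_[2]) (2 ^ n)) = 2 ^ n := by
  rw [Measure.real, measure_closedBall_two_zpow hμ, ← ENNReal.coe_two,
    ← ENNReal.coe_zpow two_ne_zero, ENNReal.coe_toReal, NNReal.coe_zpow, NNReal.coe_ofNat]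

theorem measureReal_closedBall_half (hμ : μ (closedBall 0 1) = 1) (a : ℚ_[2]) :
    μ.real (closedBall a 2⁻¹) = 2⁻¹ := by
  rw [Measure.real, Measure.addHaar_closedBall_center, measure_closedBall_half hμ,
    ENNReal.toReal_inv, ENNReal.toReal_ofNat]

theorem measureReal_closedBall_norm (hμ : μ (closedBall 0 1) = 1) {a : ℚ_[2]} (ha : a ≠ 0) :
    μ.real (closedBall 0 ‖a‖) = ‖a‖ := by
  have h := norm_eq_zpow_neg_valuation ha
  push_cast at h
  rw [h, measureReal_closedBall_two_zpow hμ]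

theorem setIntegral_Mset_zero_eq_add {f : ℚ_[2] → ℚ_[2] → ℂ}
    (hf : Continuous (Function.uncurry f)) :
    ∫ p in Mset 0, f p.1 p.2 ∂μ.prod μ =
      (∫ x in closedBall 0 2⁻¹, ∫ y in closedBall 0 2⁻¹, f x y ∂μ ∂μ) +
        ∫ x in closedBall 1 2⁻¹, ∫ y in closedBall 1 2⁻¹, f x y ∂μ ∂μ := by
  have hint : ∀ a : ℚ_[2],
      IntegrableOn (Function.uncurry f) (closedBall a 2⁻¹ ×ˢ closedBall a 2⁻¹) (μ.prod μ) :=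
    fun a => hf.continuousOn.integrableOn_compact
      ((isCompact_closedBall a _).prod (isCompact_closedBall a _))
  change ∫ p in Mset 0, Function.uncurry f p ∂μ.prod μ = _
  rw [Mset_zero_eq, setIntegral_union (Set.disjoint_prod.2 (Or.inl disjoint_closedBall_half))
    (measurableSet_closedBall.prod measurableSet_closedBall) (hint 0) (hint 1),
    setIntegral_prod _ (hint 0), setIntegral_prod _ (hint 1)]
  rfl

section Character

variable {ψ : AddChar ℚ_[2] ℂ}

theorem setIntegral_closedBall_two_zpow (hμ : μ (closedBall 0 1) = 1)
    (hψ : ∀ x : ℚ_[2], ‖x‖ ≤ 1 → ψ x = 1) (hψhalf : ψ 2⁻¹ ≠ 1) (c : ℚ_[2]) (n : ℤ) :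
    ∫ x in closedBall 0 (2 ^ n), ψ (c * x) ∂μ =
      if ‖c‖ ≤ 2 ^ (-n) then ((2 ^ n : ℝ) : ℂ) else 0 := by
  split_ifs with hc
  · have hone : ∀ x ∈ closedBall (0 : ℚ_[2]) (2 ^ n), ψ (c * x) = 1 := by
      intro x hx
      apply hψ
      rw [mem_closedBall_zero_iff] at hx
      calc ‖c * x‖ = ‖c‖ * ‖x‖ := norm_mul c x
        _ ≤ 2 ^ (-n) * 2 ^ n := by gcongr
        _ = 1 := by rw [← zpow_add₀ two_ne_zero, neg_add_cancel, zpow_zero]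
    rw [setIntegral_congr_fun measurableSet_closedBall hone, setIntegral_const,
      measureReal_closedBall_two_zpow hμ, Complex.real_smul, mul_one]
  · have hc' : 2 ^ (-n + 1) ≤ ‖c‖ := not_lt.1 fun h => hc (norm_le_two_zpow_of_lt h)
    have hc0 : c ≠ 0 := norm_pos_iff.1 (lt_of_lt_of_le (by positivity) hc')
    have hmem : ‖(2 * c)⁻¹‖ ≤ 2 ^ n := by
      rw [norm_inv, norm_mul, norm_two_eq]
      calc (2⁻¹ * ‖c‖)⁻¹ ≤ (2⁻¹ * 2 ^ (-n + 1))⁻¹ := by gcongr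
        _ = 2 ^ n := by
          rw [zpow_add_one₀ two_ne_zero, zpow_neg, mul_comm, mul_assoc, mul_inv_cancel₀ two_ne_zero,
            mul_one, inv_inv]
    have hhalf : c * (2 * c)⁻¹ = 2⁻¹ := by field_simp
    let H := (IsUltrametricDist.closedBall_openAddSubgroup ℚ_[2] (r := 2 ^ n) (by positivity))
    exact AddChar.setIntegral_addSubgroup_eq_zero μ (ψ.mulShift c) H.toAddSubgroup
      (mem_closedBall_zero_iff.2 hmem) (by rwa [AddChar.mulShift_apply, hhalf])

theorem setIntegral_closedBall_half (hμ : μ (closedBall 0 1) = 1)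
    (hψ : ∀ x : ℚ_[2], ‖x‖ ≤ 1 → ψ x = 1) (hψhalf : ψ 2⁻¹ ≠ 1) (c : ℚ_[2]) :
    ∫ x in closedBall 0 2⁻¹, ψ (c * x) ∂μ = if ‖c‖ ≤ 2 then 2⁻¹ else 0 := by
  simpa using setIntegral_closedBall_two_zpow hμ hψ hψhalf c (-1)

theorem setIntegral_closedBall_one_eq_mul (c : ℚ_[2]) :
    ∫ y in closedBall 1 2⁻¹, ψ (c * y) ∂μ = ψ c * ∫ y in closedBall 0 2⁻¹, ψ (c * y) ∂μ := by
  calc ∫ y in closedBall 1 2⁻¹, ψ (c * y) ∂μ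
      = ∫ y in (1 + ·) ⁻¹' closedBall 1 2⁻¹, ψ (c * (1 + y)) ∂μ :=
        ((measurePreserving_add_left μ 1).setIntegral_preimage_emb
          (measurableEmbedding_addLeft 1) _ _).symm
    _ = ψ c * ∫ y in closedBall 0 2⁻¹, ψ (c * y) ∂μ := by
        simp only [preimage_add_closedBall, sub_self, mul_add, mul_one, AddChar.map_add_eq_mul,
          integral_const_mul]

theorem integral_integral_closedBall_zero_of_norm_le_four (hμ : μ (closedBall 0 1) = 1)
    (hψ : ∀ x : ℚ_[2], ‖x‖ ≤ 1 → ψ x = 1) (hψhalf : ψ 2⁻¹ ≠ 1) {b : ℚ_[2]} (hb : ‖b‖ ≤ 4) :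
    ∫ x in closedBall 0 2⁻¹, ∫ y in closedBall 0 2⁻¹, ψ (b * x * y) ∂μ ∂μ = 4⁻¹ := by
  have hinner : ∀ x ∈ closedBall (0 : ℚ_[2]) 2⁻¹,
      ∫ y in closedBall 0 2⁻¹, ψ (b * x * y) ∂μ = 2⁻¹ := by
    intro x hx
    rw [mem_closedBall_zero_iff] at hx
    rw [setIntegral_closedBall_half hμ hψ hψhalf, if_pos]
    rw [norm_mul]
    nlinarith [norm_nonneg b, norm_nonneg x]
  rw [setIntegral_congr_fun measurableSet_closedBall hinner, setIntegral_const,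
    measureReal_closedBall_half hμ]
  norm_num

theorem integral_integral_closedBall_zero_of_four_le (hμ : μ (closedBall 0 1) = 1)
    (hψ : ∀ x : ℚ_[2], ‖x‖ ≤ 1 → ψ x = 1) (hψhalf : ψ 2⁻¹ ≠ 1) {b : ℚ_[2]} (hb : 4 ≤ ‖b‖) :
    ∫ x in closedBall 0 2⁻¹, ∫ y in closedBall 0 2⁻¹, ψ (b * x * y) ∂μ ∂μ = ((‖b‖⁻¹ : ℝ) : ℂ) := by
  have hb0 : b ≠ 0 := norm_pos_iff.1 (by linarith)
  have hr : ‖(2 * b)⁻¹‖ = 2 / ‖b‖ := by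
    rw [norm_inv, norm_mul, norm_two_eq]
    field_simp
  have hsub : closedBall (0 : ℚ_[2]) ‖(2 * b)⁻¹‖ ⊆ closedBall 0 2⁻¹ := by
    refine closedBall_subset_closedBall ?_
    rw [hr, div_le_iff₀ (by linarith)]
    linarith
  have hinner : ∀ x ∈ closedBall (0 : ℚ_[2]) 2⁻¹, ∫ y in closedBall 0 2⁻¹, ψ (b * x * y) ∂μ =
      (closedBall 0 ‖(2 * b)⁻¹‖).indicator (fun _ => (2⁻¹ : ℂ)) x := by
    classical
    intro x _
    have hiff : ‖b * x‖ ≤ 2 ↔ x ∈ closedBall 0 ‖(2 * b)⁻¹‖ := by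
      rw [mem_closedBall_zero_iff, hr, le_div_iff₀ (by linarith), norm_mul, mul_comm]
    rw [setIntegral_closedBall_half hμ hψ hψhalf, Set.indicator_apply]
    exact if_congr hiff rfl rfl
  rw [setIntegral_congr_fun measurableSet_closedBall hinner,
    setIntegral_indicator measurableSet_closedBall, Set.inter_eq_right.2 hsub, setIntegral_const,
    measureReal_closedBall_norm hμ (by simpa using hb0), hr, Complex.real_smul]
  push_cast
  field_simp

theorem integral_integral_closedBall_one (hμ : μ (closedBall 0 1) = 1)
    (hψ : ∀ x : ℚ_[2], ‖x‖ ≤ 1 → ψ x = 1) (hψhalf : ψ 2⁻¹ ≠ 1) (b : ℚ_[2]) :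
    ∫ x in closedBall 1 2⁻¹, ∫ y in closedBall 1 2⁻¹, ψ (b * x * y) ∂μ ∂μ =
      if ‖b‖ ≤ 2 then ψ b * 4⁻¹ else 0 := by
  have hinner : ∀ x ∈ closedBall (1 : ℚ_[2]) 2⁻¹, ∫ y in closedBall 1 2⁻¹, ψ (b * x * y) ∂μ =
      if ‖b‖ ≤ 2 then ψ b * 2⁻¹ else 0 := by
    intro x hx
    rw [mem_closedBall, dist_eq_norm] at hx
    rw [setIntegral_closedBall_one_eq_mul, setIntegral_closedBall_half hμ hψ hψhalf, norm_mul,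
      norm_eq_one_of_norm_sub_one_le_half hx, mul_one]
    split_ifs with hb
    · rw [apply_mul_eq_of_norm_sub_one_le_half hψ hb hx]
    · rw [mul_zero]
  rw [setIntegral_congr_fun measurableSet_closedBall hinner, setIntegral_const,
    measureReal_closedBall_half hμ]
  split_ifs
  · rw [Complex.real_smul]
    push_cast
    ring
  · simp

end Character

end Measure

end Padic

open Padic

theorem stmt11_general [MeasurableSpace ℚ_[2]] [BorelSpace ℚ_[2]]
    (μ : Measure ℚ_[2]) [μ.IsAddHaarMeasure]
    (hμ : μ {x : ℚ_[2] | ‖x‖ ≤ 1} = 1)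
    (ψ : ℚ_[2] → ℂ) (hψcont : Continuous ψ)
    (hψadd : ∀ x y : ℚ_[2], ψ (x + y) = ψ x * ψ y)
    (hψtriv : ∀ x : ℚ_[2], ‖x‖ ≤ 1 → ψ x = 1)
    (hψhalf : ψ (2⁻¹ : ℚ_[2]) = -1)
    (b : ℚ_[2]) :
    (‖b‖ ≤ 1 → (∫ p in Mset 0, ψ (b * p.1 * p.2) ∂(μ.prod μ)) = (1 / 2 : ℂ)) ∧
    (‖b‖ = 2 → (∫ p in Mset 0, ψ (b * p.1 * p.2) ∂(μ.prod μ)) = 0) ∧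
    (4 ≤ ‖b‖ → (∫ p in Mset 0, ψ (b * p.1 * p.2) ∂(μ.prod μ)) = ((‖b‖⁻¹ : ℝ) : ℂ)) := by
  obtain ⟨Ψ, rfl⟩ : ∃ Ψ : AddChar ℚ_[2] ℂ, ⇑Ψ = ψ :=
    ⟨{ toFun := ψ, map_zero_eq_one' := hψtriv 0 (by simp), map_add_eq_mul' := hψadd }, rfl⟩
  have hμ₁ : μ (closedBall 0 1) = 1 := by
    rwa [← show {x : ℚ_[2] | ‖x‖ ≤ 1} = closedBall 0 1 by ext; simp]
  have hΨhalf : Ψ 2⁻¹ ≠ 1 := by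
    rw [hψhalf]
    norm_num
  have hJ := setIntegral_Mset_zero_eq_add (μ := μ) (f := fun x y => Ψ (b * x * y))
    (hψcont.comp (by fun_prop))
  have hO := integral_integral_closedBall_one hμ₁ hψtriv hΨhalf b
  refine ⟨fun hb => ?_, fun hb => ?_, fun hb => ?_⟩
  · rw [hJ, hO, integral_integral_closedBall_zero_of_norm_le_four hμ₁ hψtriv hΨhalf (by linarith),
      if_pos (by linarith), hψtriv b hb]
    norm_num
  · rw [hJ, hO, integral_integral_closedBall_zero_of_norm_le_four hμ₁ hψtriv hΨhalf (by linarith),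
      if_pos hb.le, apply_eq_neg_one_of_norm_eq_two hψtriv hψhalf hb]
    norm_num
  · rw [hJ, hO, integral_integral_closedBall_zero_of_four_le hμ₁ hψtriv hΨhalf hb,
      if_neg (by linarith), add_zero]

/-- **Paper, proof of Lemma 5.5:** the formula for `J₀(b)`, i.e.
`∫_{M₀} ψ(b x₁ x₂) d(μ×μ)` equals `1/2` when `‖b‖ ≤ 1`, equals `0` when `‖b‖ = 2`,
and equals `‖b‖⁻¹` when `‖b‖ ≥ 4`. -/
theorem stmt11 [MeasurableSpace ℚ_[2]] [BorelSpace ℚ_[2]]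
    (μ : Measure ℚ_[2]) [μ.IsAddHaarMeasure] [SigmaFinite μ]
    (hμ : μ {x : ℚ_[2] | ‖x‖ ≤ 1} = 1)
    (ψ : ℚ_[2] → ℂ) (hψcont : Continuous ψ)
    (hψadd : ∀ x y : ℚ_[2], ψ (x + y) = ψ x * ψ y)
    (hψtriv : ∀ x : ℚ_[2], ‖x‖ ≤ 1 → ψ x = 1)
    (hψhalf : ψ (2⁻¹ : ℚ_[2]) = -1)
    (b : ℚ_[2]) :
    (‖b‖ ≤ 1 → (∫ p in Mset 0, ψ (b * p.1 * p.2) ∂(μ.prod μ)) = (1 / 2 : ℂ)) ∧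
    (‖b‖ = 2 → (∫ p in Mset 0, ψ (b * p.1 * p.2) ∂(μ.prod μ)) = 0) ∧
    (4 ≤ ‖b‖ → (∫ p in Mset 0, ψ (b * p.1 * p.2) ∂(μ.prod μ)) = ((‖b‖⁻¹ : ℝ) : ℂ)) :=
  stmt11_general μ hμ ψ hψcont hψadd hψtriv hψhalf b
end

section
/- For every real s > 0 and t ∈ ℚ₂, the integral I₁(s,t) := ∫_{ℚ₂} (∫_{M₁} ψ(b·x₁x₂) d(μ×μ)) · ψ(−t·b) · min(1, ‖b‖⁻¹)^s dμ(b) converges absolutely and equals: 0 if ‖t‖ > 1; (1/2)(1 − 2^{−s}) if ‖t‖ = 1; and (1/2)(1 + 2^{−s}) if ‖t‖ ≤ 1/2. (This is the normalized local Whittaker function W_{tα}(s, φ₁)/γ(W) of Lemma 5.5(2), with the 2-adic unit α absorbed into t.) -/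
/-!
Splitting `M₁` by parity, `M₁ = 2ℤ₂ × (1 + 2ℤ₂) ∪ (1 + 2ℤ₂) × 2ℤ₂`, and integrating first over the
even coordinate `x`, the inner integral is the character integral `∫_{2ℤ₂} ψ(b y x) dx` with
`‖y‖ = 1`; it equals `μ(2ℤ₂) = 1/2` if `‖b‖ ≤ 2` and vanishes otherwise by orthogonality, so
`J₁(b) = 1/2 · 1[‖b‖ ≤ 2]`. Since norms are powers of `2`, on `‖b‖ ≤ 2` the weight
`min(1, ‖b‖⁻¹)^s` is `1` on `ℤ₂` and `2^{-s}` on `‖b‖ = 2`. Hence `I₁(s,t)` is a combination of the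
integrals of `ψ(-tb)` over `ℤ₂` and `2⁻¹ℤ₂`, which are again the volumes `1`, `2` of these balls
or `0`. The volumes come from `μ(B(0, ‖c‖)) = 2 μ(B(0, ‖c‖/2))`, as `B(0, ‖c‖)` is the disjoint
union of `B(0, ‖c‖/2)` and `B(c, ‖c‖/2)`.
-/

open MeasureTheory

open Metric

namespace TwoAdic

lemma norm_two : ‖(2 : ℚ_[2])‖ = 2⁻¹ := by
  simpa using Padic.norm_p (p := 2)

lemma norm_two_zpow_neg (n : ℤ) : ‖(2 : ℚ_[2]) ^ (-n)‖ = 2 ^ n := by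
  rw [norm_zpow, norm_two, inv_zpow', neg_neg]

lemma norm_le_two_zpow_of_lt {x : ℚ_[2]} {n : ℤ} (h : ‖x‖ < 2 ^ (n + 1)) : ‖x‖ ≤ 2 ^ n := by
  exact_mod_cast (Padic.norm_le_pow_iff_norm_lt_pow_add_one x n).2 (by exact_mod_cast h)

-- The residue field of `ℤ₂` is `𝔽₂`.
lemma norm_le_half_or_norm_sub_le_half {x c : ℚ_[2]} (hx : ‖x‖ ≤ ‖c‖) :
    ‖x‖ ≤ ‖c‖ / 2 ∨ ‖x - c‖ ≤ ‖c‖ / 2 := by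
  rcases eq_or_ne c 0 with rfl | hc
  · simp_all
  have hc' : 0 < ‖c‖ := norm_pos_iff.2 hc
  have hu : ‖x / c‖ ≤ 1 := by rwa [norm_div, div_le_one hc']
  let u : ℤ_[2] := ⟨x / c, hu⟩
  obtain ⟨n, hn2, hn⟩ := PadicInt.exists_mem_range u
  rw [PadicInt.maximalIdeal_eq_span_p, Ideal.mem_span_singleton,
    ← PadicInt.norm_lt_one_iff_dvd, PadicInt.norm_def, PadicInt.coe_sub,
    PadicInt.coe_natCast] at hn
  have hn' : ‖x / c - n‖ ≤ 1 / 2 := by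
    simpa using norm_le_two_zpow_of_lt (n := -1) (by simpa using hn)
  have key : ‖x - n * c‖ ≤ ‖c‖ / 2 := by
    rw [show x - n * c = (x / c - n) * c by field_simp, norm_mul]
    nlinarith
  interval_cases n
  · left; simpa using key
  · right; simpa using key

lemma closedBall_norm_eq_union (c : ℚ_[2]) :
    closedBall (0 : ℚ_[2]) ‖c‖ = closedBall 0 (‖c‖ / 2) ∪ closedBall c (‖c‖ / 2) := by
  ext x
  simp only [Set.mem_union, mem_closedBall_iff_norm, sub_zero]
  refine ⟨norm_le_half_or_norm_sub_le_half, ?_⟩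
  rintro (hx | hx)
  · linarith [norm_nonneg c]
  · calc ‖x‖ = ‖(x - c) + c‖ := by rw [sub_add_cancel]
      _ ≤ max ‖x - c‖ ‖c‖ := IsUltrametricDist.norm_add_le_max _ _
      _ ≤ ‖c‖ := max_le (by linarith [norm_nonneg c]) le_rfl

lemma disjoint_closedBall_zero_closedBall {c : ℚ_[2]} (hc : c ≠ 0) :
    Disjoint (closedBall 0 (‖c‖ / 2)) (closedBall c (‖c‖ / 2)) := by
  refine (IsUltrametricDist.closedBall_eq_or_disjoint 0 c _).resolve_left fun h => ?_
  have hmem : c ∈ closedBall (0 : ℚ_[2]) (‖c‖ / 2) := h ▸ mem_closedBall_self (by positivity)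
  rw [mem_closedBall_zero_iff] at hmem
  linarith [norm_pos_iff.2 hc]

lemma Mset_one_eq : Mset 1 = closedBall 0 (1 / 2) ×ˢ closedBall 1 (1 / 2)
    ∪ closedBall 1 (1 / 2) ×ˢ closedBall 0 (1 / 2) := by
  have ultra {a b : ℚ_[2]} {r : ℝ} (ha : ‖a‖ ≤ r) (hb : ‖b‖ ≤ r) : ‖a + b‖ ≤ r :=
    (IsUltrametricDist.norm_add_le_max a b).trans (max_le ha hb)
  ext ⟨x, y⟩
  simp only [Mset, Set.mem_ofPred_eq, Set.mem_union, Set.mem_prod, mem_closedBall_iff_norm,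
    sub_zero, Nat.cast_one]
  constructor
  · rintro ⟨hx, -, hxy⟩
    rcases norm_le_half_or_norm_sub_le_half (c := 1) (by simpa using hx) with h | h <;>
      rw [norm_one] at h
    · refine Or.inl ⟨h, ?_⟩
      rw [show y - 1 = (x + y - 1) + -x by ring]
      exact ultra hxy (by rwa [norm_neg])
    · refine Or.inr ⟨h, ?_⟩
      rw [show y = (x + y - 1) + -(x - 1) by ring]
      exact ultra hxy (by rwa [norm_neg])
  · have hone : ‖(1 : ℚ_[2])‖ ≤ 1 := norm_one.le
    rintro (⟨hx, hy⟩ | ⟨hx, hy⟩)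
    · refine ⟨hx.trans (by norm_num), ?_, ?_⟩
      · rw [show y = (y - 1) + 1 by ring]
        exact ultra (hy.trans (by norm_num)) hone
      · rw [show x + y - 1 = x + (y - 1) by ring]
        exact ultra hx hy
    · refine ⟨?_, hy.trans (by norm_num), ?_⟩
      · rw [show x = (x - 1) + 1 by ring]
        exact ultra (hx.trans (by norm_num)) hone
      · rw [show x + y - 1 = (x - 1) + y by ring]
        exact ultra hx hy

lemma norm_eq_one_of_mem_closedBall_one {y : ℚ_[2]} (hy : y ∈ closedBall 1 (1 / 2)) :
    ‖y‖ = 1 := by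
  rw [mem_closedBall_iff_norm] at hy
  have hne : ‖y - 1‖ ≠ ‖(1 : ℚ_[2])‖ := by rw [norm_one]; linarith
  rw [← sub_add_cancel y 1, IsUltrametricDist.norm_add_eq_max_of_norm_ne_norm hne, norm_one]
  exact max_eq_right (by linarith)

lemma rpow_min_one_inv_norm {b : ℚ_[2]} (hb : b ≠ 0) (hb2 : ‖b‖ ≤ 2) (s : ℝ) :
    (min 1 ‖b‖⁻¹) ^ s = if ‖b‖ ≤ 1 then 1 else (2 : ℝ) ^ (-s) := by
  split_ifs with hb1
  · rw [min_eq_left ((one_le_inv₀ (norm_pos_iff.2 hb)).2 hb1), Real.one_rpow]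
  · have h2 : ‖b‖ = 2 := le_antisymm hb2 <| not_lt.1 fun h =>
      hb1 (by simpa using norm_le_two_zpow_of_lt (n := 0) (by simpa using h))
    rw [h2, min_eq_right (by norm_num), Real.inv_rpow zero_le_two, Real.rpow_neg zero_le_two]

section Character

variable {E : Type*} [NormedAddCommGroup E] [MeasurableSpace E] [BorelSpace E]
  (μ : Measure E) [μ.IsAddLeftInvariant] {χ : E → ℂ}

lemma setIntegral_closedBall_eq_mul (hχ : ∀ x y, χ (x + y) = χ x * χ y) (z : E) (r : ℝ) :
    ∫ x in closedBall z r, χ x ∂μ = χ z * ∫ x in closedBall 0 r, χ x ∂μ := by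
  rw [← (measurePreserving_add_left μ z).setIntegral_preimage_emb
    (measurableEmbedding_addLeft z), preimage_add_closedBall, sub_self, ← integral_const_mul]
  simp_rw [hχ]

-- By the ultrametric inequality, translation by `h` maps the ball onto itself.
lemma setIntegral_closedBall_eq_zero [IsUltrametricDist E]
    (hχ : ∀ x y, χ (x + y) = χ x * χ y) {h : E} {r : ℝ} (hh : ‖h‖ ≤ r) (hχh : χ h ≠ 1) :
    ∫ x in closedBall 0 r, χ x ∂μ = 0 := by
  have hball : closedBall (0 : E) r = closedBall h r :=
    IsUltrametricDist.closedBall_eq_of_mem (mem_closedBall_zero_iff.2 hh)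
  have key := setIntegral_closedBall_eq_mul μ hχ h r
  rw [← hball] at key
  have : (1 - χ h) * ∫ x in closedBall 0 r, χ x ∂μ = 0 := by linear_combination key
  exact (mul_eq_zero.1 this).resolve_left (sub_ne_zero.2 hχh.symm)

end Character

section Haar

variable [MeasurableSpace ℚ_[2]] [BorelSpace ℚ_[2]] (μ : Measure ℚ_[2]) [μ.IsAddHaarMeasure]

lemma measureReal_closedBall_norm {c : ℚ_[2]} (hc : c ≠ 0) :
    μ.real (closedBall 0 ‖c‖) = 2 * μ.real (closedBall 0 (‖c‖ / 2)) := by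
  rw [closedBall_norm_eq_union, measureReal_union (disjoint_closedBall_zero_closedBall hc)
    measurableSet_closedBall measure_closedBall_lt_top.ne measure_closedBall_lt_top.ne,
    Measure.addHaar_real_closedBall_center μ c]
  ring

lemma measureReal_closedBall_two_zpow (hμ : μ (closedBall 0 1) = 1) (n : ℤ) :
    μ.real (closedBall (0 : ℚ_[2]) (2 ^ n)) = 2 ^ n := by
  have step (n : ℤ) :
      μ.real (closedBall (0 : ℚ_[2]) (2 ^ (n + 1))) = 2 * μ.real (closedBall 0 (2 ^ n)) := by
    have h := measureReal_closedBall_norm μ (c := 2 ^ (-(n + 1))) (zpow_ne_zero _ two_ne_zero)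
    rwa [norm_two_zpow_neg, zpow_add_one₀ two_ne_zero, mul_div_cancel_right₀ _ two_ne_zero,
      ← zpow_add_one₀ two_ne_zero] at h
  induction n with
  | zero => simp [measureReal_def, hμ]
  | succ n ih => rw [step, ih, zpow_add_one₀ two_ne_zero, mul_comm]
  | pred n ih =>
    have h := step (-n - 1)
    rw [sub_add_cancel, ih] at h
    have h2 : (2 : ℝ) ^ (-(n : ℤ)) = 2 * 2 ^ (-(n : ℤ) - 1) := by
      rw [zpow_sub_one₀ two_ne_zero]; ring
    linarith

variable {ψ : ℚ_[2] → ℂ} (hψadd : ∀ x y : ℚ_[2], ψ (x + y) = ψ x * ψ y)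
  (hψtriv : ∀ x : ℚ_[2], ‖x‖ ≤ 1 → ψ x = 1) (hψhalf : ψ (2⁻¹ : ℚ_[2]) = -1)
  (hμ : μ (closedBall 0 1) = 1)

include hψadd hψtriv hψhalf hμ

lemma setIntegral_closedBall_two_zpow_mul (c : ℚ_[2]) (n : ℤ) :
    ∫ x in closedBall (0 : ℚ_[2]) (2 ^ n), ψ (c * x) ∂μ
      = if ‖c‖ ≤ 2 ^ (-n) then (2 : ℂ) ^ n else 0 := by
  split_ifs with hc
  · have hone : ∀ x ∈ closedBall (0 : ℚ_[2]) (2 ^ n), ψ (c * x) = 1 := fun x hx => by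
      refine hψtriv _ ?_
      calc ‖c * x‖ ≤ 2 ^ (-n) * 2 ^ n :=
            norm_mul c x ▸ mul_le_mul hc (mem_closedBall_zero_iff.1 hx) (norm_nonneg _)
              (by positivity)
        _ = 1 := by rw [← zpow_add₀ two_ne_zero, neg_add_cancel, zpow_zero]
    rw [setIntegral_congr_fun measurableSet_closedBall hone, setIntegral_const,
      measureReal_closedBall_two_zpow μ hμ, Complex.real_smul, mul_one]
    rw [Complex.ofReal_zpow, Complex.ofReal_ofNat]
  · have hc' : (2 : ℝ) ^ (-n + 1) ≤ ‖c‖ := not_lt.1 fun h => hc (norm_le_two_zpow_of_lt h)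
    have hc0 : c ≠ 0 := by
      rintro rfl
      exact hc (by rw [norm_zero]; positivity)
    refine setIntegral_closedBall_eq_zero μ (χ := fun x => ψ (c * x))
      (fun x y => by rw [mul_add, hψadd]) (h := (2 * c)⁻¹) ?_ ?_
    · rw [norm_inv, norm_mul, norm_two, mul_inv, inv_inv, ← div_eq_mul_inv,
        div_le_iff₀ (norm_pos_iff.2 hc0)]
      calc (2 : ℝ) = 2 ^ n * 2 ^ (-n + 1) := by
            rw [← zpow_add₀ two_ne_zero]; simp
        _ ≤ 2 ^ n * ‖c‖ := by gcongr
    · rw [show c * (2 * c)⁻¹ = 2⁻¹ by field_simp, hψhalf]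
      norm_num

lemma setIntegral_closedBall_half_mul (c : ℚ_[2]) :
    ∫ x in closedBall (0 : ℚ_[2]) (1 / 2), ψ (c * x) ∂μ = if ‖c‖ ≤ 2 then 1 / 2 else 0 := by
  simpa using setIntegral_closedBall_two_zpow_mul μ hψadd hψtriv hψhalf hμ c (-1)

lemma setIntegral_Mset_one (hψcont : Continuous ψ) (b : ℚ_[2]) :
    ∫ p in Mset 1, ψ (b * p.1 * p.2) ∂(μ.prod μ) = if ‖b‖ ≤ 2 then 1 / 2 else 0 := by
  set B₀ := closedBall (0 : ℚ_[2]) (1 / 2)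
  set B₁ := closedBall (1 : ℚ_[2]) (1 / 2)
  have integrableOn_prod (x y : ℚ_[2]) : IntegrableOn (fun p : ℚ_[2] × ℚ_[2] => ψ (b * p.1 * p.2))
      (closedBall x (1 / 2) ×ˢ closedBall y (1 / 2)) (μ.prod μ) :=
    (by fun_prop : Continuous fun p : ℚ_[2] × ℚ_[2] => ψ (b * p.1 * p.2)).continuousOn
      |>.integrableOn_compact ((isCompact_closedBall _ _).prod (isCompact_closedBall _ _))
  have hB₁B₀ : ∫ p in B₁ ×ˢ B₀, ψ (b * p.1 * p.2) ∂(μ.prod μ)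
      = 1 / 2 * if ‖b‖ ≤ 2 then 1 / 2 else 0 := by
    rw [setIntegral_prod _ (integrableOn_prod _ _)]
    calc _ = ∫ _ in B₁, (if ‖b‖ ≤ 2 then (1 / 2 : ℂ) else 0) ∂μ :=
          setIntegral_congr_fun measurableSet_closedBall fun y hy => by
            dsimp only
            rw [setIntegral_closedBall_half_mul μ hψadd hψtriv hψhalf hμ, norm_mul,
              norm_eq_one_of_mem_closedBall_one hy, mul_one]
      _ = _ := by
        rw [setIntegral_const, Measure.addHaar_real_closedBall_center,
          show (1 / 2 : ℝ) = 2 ^ (-1 : ℤ) by norm_num, measureReal_closedBall_two_zpow μ hμ]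
        simp
  have hB₀B₁ : ∫ p in B₀ ×ˢ B₁, ψ (b * p.1 * p.2) ∂(μ.prod μ)
      = ∫ p in B₁ ×ˢ B₀, ψ (b * p.1 * p.2) ∂(μ.prod μ) := by
    rw [← setIntegral_prod_swap]
    simp_rw [Prod.fst_swap, Prod.snd_swap, mul_right_comm b]
  have hdisj : Disjoint (B₀ ×ˢ B₁) (B₁ ×ˢ B₀) :=
    Set.disjoint_prod.2 <| Or.inl <| by
      simpa [B₀, B₁] using disjoint_closedBall_zero_closedBall one_ne_zero
  rw [Mset_one_eq, setIntegral_union hdisj (measurableSet_closedBall.prod measurableSet_closedBall)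
    (integrableOn_prod _ _) (integrableOn_prod _ _), hB₀B₁, hB₁B₀]
  split_ifs <;> norm_num

lemma whittaker_integrand_ae_eq (hψcont : Continuous ψ) (s : ℝ) (t : ℚ_[2]) :
    (fun b : ℚ_[2] => (∫ p in Mset 1, ψ (b * p.1 * p.2) ∂(μ.prod μ)) * ψ (-(t * b))
        * (((min 1 ‖b‖⁻¹) ^ s : ℝ) : ℂ))
      =ᵐ[μ] fun b => 1 / 2 * (((2 : ℝ) ^ (-s) : ℝ) : ℂ)
          * (closedBall 0 2).indicator (fun b => ψ (-t * b)) b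
        + 1 / 2 * (1 - (((2 : ℝ) ^ (-s) : ℝ) : ℂ))
          * (closedBall 0 1).indicator (fun b => ψ (-t * b)) b := by
  -- At `b = 0` the weight is `0 ^ s`, because `‖0‖⁻¹ = 0`.
  filter_upwards [Measure.ae_ne μ 0] with b hb
  simp only [setIntegral_Mset_one μ hψadd hψtriv hψhalf hμ hψcont, Set.indicator,
    mem_closedBall_zero_iff, neg_mul]
  by_cases hb2 : ‖b‖ ≤ 2
  · rw [rpow_min_one_inv_norm hb hb2]
    by_cases hb1 : ‖b‖ ≤ 1
    · simp only [hb1, hb2, if_true, Complex.ofReal_one]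
      ring
    · simp only [hb1, hb2, if_true, if_false]
      ring
  · have hb1 : ¬ ‖b‖ ≤ 1 := fun h => hb2 (h.trans one_le_two)
    simp only [hb1, hb2, if_false]
    ring

lemma integrable_and_integral_whittaker (hψcont : Continuous ψ) (s : ℝ) (t : ℚ_[2]) :
    Integrable (fun b : ℚ_[2] => (∫ p in Mset 1, ψ (b * p.1 * p.2) ∂(μ.prod μ))
        * ψ (-(t * b)) * (((min 1 ‖b‖⁻¹) ^ s : ℝ) : ℂ)) μ ∧
    ∫ b : ℚ_[2], (∫ p in Mset 1, ψ (b * p.1 * p.2) ∂(μ.prod μ))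
        * ψ (-(t * b)) * (((min 1 ‖b‖⁻¹) ^ s : ℝ) : ℂ) ∂μ
      = 1 / 2 * (((2 : ℝ) ^ (-s) : ℝ) : ℂ) * (if ‖t‖ ≤ 1 / 2 then 2 else 0)
        + 1 / 2 * (1 - (((2 : ℝ) ^ (-s) : ℝ) : ℂ)) * (if ‖t‖ ≤ 1 then 1 else 0) := by
  have hF := whittaker_integrand_ae_eq μ hψadd hψtriv hψhalf hμ hψcont s t
  have hind (r : ℝ) : Integrable ((closedBall 0 r).indicator fun b => ψ (-t * b)) μ :=
    ((by fun_prop : Continuous fun b => ψ (-t * b)).continuousOn.integrableOn_compact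
      (isCompact_closedBall 0 r)).integrable_indicator measurableSet_closedBall
  have hball (n : ℤ) : ∫ b, (closedBall 0 ((2 : ℝ) ^ n)).indicator (fun b => ψ (-t * b)) b ∂μ
      = if ‖t‖ ≤ 2 ^ (-n) then (2 : ℂ) ^ n else 0 := by
    rw [integral_indicator measurableSet_closedBall,
      setIntegral_closedBall_two_zpow_mul μ hψadd hψtriv hψhalf hμ, norm_neg]
  refine ⟨(integrable_congr hF).2 (((hind 2).const_mul _).add ((hind 1).const_mul _)), ?_⟩
  rw [integral_congr_ae hF, integral_add ((hind 2).const_mul _) ((hind 1).const_mul _),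
    integral_const_mul, integral_const_mul]
  simpa using congr_arg₂ (fun x y => 1 / 2 * (((2 : ℝ) ^ (-s) : ℝ) : ℂ) * x
    + 1 / 2 * (1 - (((2 : ℝ) ^ (-s) : ℝ) : ℂ)) * y) (hball 1) (hball 0)

end Haar

end TwoAdic

open TwoAdic

theorem stmt13_general [MeasurableSpace ℚ_[2]] [BorelSpace ℚ_[2]]
    (μ : Measure ℚ_[2]) [μ.IsAddHaarMeasure]
    (hμ : μ {x : ℚ_[2] | ‖x‖ ≤ 1} = 1)
    (ψ : ℚ_[2] → ℂ) (hψcont : Continuous ψ)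
    (hψadd : ∀ x y : ℚ_[2], ψ (x + y) = ψ x * ψ y)
    (hψtriv : ∀ x : ℚ_[2], ‖x‖ ≤ 1 → ψ x = 1)
    (hψhalf : ψ (2⁻¹ : ℚ_[2]) = -1)
    (s : ℝ) (t : ℚ_[2]) :
    Integrable
      (fun b : ℚ_[2] =>
        (∫ p in Mset 1, ψ (b * p.1 * p.2) ∂(μ.prod μ)) * ψ (-(t * b))
          * (((min 1 ‖b‖⁻¹) ^ s : ℝ) : ℂ)) μ ∧
    (1 < ‖t‖ →
      (∫ b : ℚ_[2],
        (∫ p in Mset 1, ψ (b * p.1 * p.2) ∂(μ.prod μ)) * ψ (-(t * b))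
          * (((min 1 ‖b‖⁻¹) ^ s : ℝ) : ℂ) ∂μ) = 0) ∧
    (‖t‖ = 1 →
      (∫ b : ℚ_[2],
        (∫ p in Mset 1, ψ (b * p.1 * p.2) ∂(μ.prod μ)) * ψ (-(t * b))
          * (((min 1 ‖b‖⁻¹) ^ s : ℝ) : ℂ) ∂μ)
        = (1 / 2 : ℂ) * (1 - (((2 : ℝ) ^ (-s) : ℝ) : ℂ))) ∧
    (‖t‖ ≤ 1 / 2 →
      (∫ b : ℚ_[2],
        (∫ p in Mset 1, ψ (b * p.1 * p.2) ∂(μ.prod μ)) * ψ (-(t * b))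
          * (((min 1 ‖b‖⁻¹) ^ s : ℝ) : ℂ) ∂μ)
        = (1 / 2 : ℂ) * (1 + (((2 : ℝ) ^ (-s) : ℝ) : ℂ))) := by
  have hμ' : μ (closedBall 0 1) = 1 := by
    simpa only [closedBall, dist_zero_right] using hμ
  obtain ⟨hint, hI⟩ := integrable_and_integral_whittaker μ hψadd hψtriv hψhalf hμ' hψcont s t
  refine ⟨hint, fun ht => ?_, fun ht => ?_, fun ht => ?_⟩ <;> rw [hI]
  · rw [if_neg (by linarith), if_neg (by linarith)]
    ring
  · rw [if_neg (by rw [ht]; norm_num), if_pos ht.le]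
    ring
  · rw [if_pos ht, if_pos (ht.trans (by norm_num))]
    ring

/-- **Paper, Lemma 5.5(2).** The normalized local Whittaker function
`I₁(s,t) = ∫_{ℚ₂} J₁(b) ψ(-tb) min(1,‖b‖⁻¹)^s dμ(b)` (with
`J₁(b) = ∫_{M₁} ψ(b x₁ x₂) d(μ×μ)`) converges absolutely for `s > 0` and equals `0` if
`‖t‖ > 1`, `(1/2)(1 - 2^{-s})` if `‖t‖ = 1`, and `(1/2)(1 + 2^{-s})` if `‖t‖ ≤ 1/2`. -/
theorem stmt13 [MeasurableSpace ℚ_[2]] [BorelSpace ℚ_[2]]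
    (μ : Measure ℚ_[2]) [μ.IsAddHaarMeasure] [SigmaFinite μ]
    (hμ : μ {x : ℚ_[2] | ‖x‖ ≤ 1} = 1)
    (ψ : ℚ_[2] → ℂ) (hψcont : Continuous ψ)
    (hψadd : ∀ x y : ℚ_[2], ψ (x + y) = ψ x * ψ y)
    (hψtriv : ∀ x : ℚ_[2], ‖x‖ ≤ 1 → ψ x = 1)
    (hψhalf : ψ (2⁻¹ : ℚ_[2]) = -1)
    (s : ℝ) (hs : 0 < s) (t : ℚ_[2]) :
    Integrable
      (fun b : ℚ_[2] =>
        (∫ p in Mset 1, ψ (b * p.1 * p.2) ∂(μ.prod μ)) * ψ (-(t * b))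
          * (((min 1 ‖b‖⁻¹) ^ s : ℝ) : ℂ)) μ ∧
    (1 < ‖t‖ →
      (∫ b : ℚ_[2],
        (∫ p in Mset 1, ψ (b * p.1 * p.2) ∂(μ.prod μ)) * ψ (-(t * b))
          * (((min 1 ‖b‖⁻¹) ^ s : ℝ) : ℂ) ∂μ) = 0) ∧
    (‖t‖ = 1 →
      (∫ b : ℚ_[2],
        (∫ p in Mset 1, ψ (b * p.1 * p.2) ∂(μ.prod μ)) * ψ (-(t * b))
          * (((min 1 ‖b‖⁻¹) ^ s : ℝ) : ℂ) ∂μ)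
        = (1 / 2 : ℂ) * (1 - (((2 : ℝ) ^ (-s) : ℝ) : ℂ))) ∧
    (‖t‖ ≤ 1 / 2 →
      (∫ b : ℚ_[2],
        (∫ p in Mset 1, ψ (b * p.1 * p.2) ∂(μ.prod μ)) * ψ (-(t * b))
          * (((min 1 ‖b‖⁻¹) ^ s : ℝ) : ℂ) ∂μ)
        = (1 / 2 : ℂ) * (1 + (((2 : ℝ) ^ (-s) : ℝ) : ℂ))) :=
  stmt13_general μ hμ ψ hψcont hψadd hψtriv hψhalf s t
end
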